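/- Let u(x) = x/|x| on ℝ², 0 < τ, M > 2, and 0 < Mτ < r. Then for every ξ ∈ ℝ² with |ξ| ≤ 1, ∫_{B_r \ B_{Mτ}} |u(x + τξ) − u(x)|² dx ≤ (M/(M−1)) · 2π τ² |ξ|² ( ½ |log(Mτ)| + ½ |log r| + C/M ) for a universal constant C. -/

import Mathlib

/-!
For `M‖h‖ ≤ ‖x‖`, writing `‖u(x+h) - u(x)‖² = 2 - 2⟪x+h, x⟫/(‖x+h‖‖x‖)` and expanding gives
`‖u(x+h) - u(x)‖² ≤ M/(M-1) (‖h‖²/‖x‖² - ⟪x,h⟫²/‖x‖⁴ + 2‖h‖³/‖x‖³)`.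
Integrate over the annulus `Mτ ≤ ‖x‖ < r` in polar coordinates: `∫ ‖x‖⁻² = 2π log(r/(Mτ))` and
`∫ ‖x‖⁻³ ≤ 2π/(Mτ)`, while rotating `h` by a right angle shows that `⟪x,h⟫²` averages to
`‖x‖²‖h‖²/2` over circles. With `h = τξ`, the cubic term contributes at most `4π‖h‖²/M`, so `C = 2`.
-/

open MeasureTheory Real Filter Metric Set

noncomputable section

abbrev E2 := EuclideanSpace ℝ (Fin 2)

/- Read `s = ‖x‖`, `e = ‖h‖`, `p = ⟪x, h⟫`, `t = ‖x + h‖`. -/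
theorem two_sub_two_mul_div_le {M s e t p : ℝ} (hM : 2 < M) (hs : 0 < s)
    (hse : M * e ≤ s) (ht : s - e ≤ t) (hp : |p| ≤ s * e) (hts : t ^ 2 = s ^ 2 + 2 * p + e ^ 2) :
    2 - 2 * (s ^ 2 + p) / (t * s) ≤
      M / (M - 1) * (e ^ 2 / s ^ 2 - p ^ 2 / s ^ 4 + 2 * e ^ 3 / s ^ 3) := by
  have he : 0 ≤ e := nonneg_of_mul_nonneg_right ((abs_nonneg p).trans hp) hs
  have h2e : 2 * e ≤ s := by nlinarith
  have hse' : 0 < s - e := by linarith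
  have ht0 : 0 < t := hse'.trans_le ht
  have hp' : -(s * e) ≤ p := neg_le_of_abs_le hp
  have hp2 : p ^ 2 ≤ s ^ 2 * e ^ 2 := by nlinarith [sq_abs p, abs_nonneg p]
  have hden : 2 * (s ^ 2 * (s - e) ^ 2) ≤ t * s * (t * s + s ^ 2 + p) := by
    have h1 : s * (s - e) ≤ t * s := by nlinarith
    have h2 : s * (s - e) ≤ s ^ 2 + p := by nlinarith
    nlinarith [mul_le_mul h1 (add_le_add h1 h2) (by positivity) (by positivity)]
  have hD : 0 < t * s * (t * s + s ^ 2 + p) := lt_of_lt_of_le (by positivity) hden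
  have hM1 : 0 ≤ M / (M - 1) := div_nonneg (by linarith) (by linarith)
  have hratio : s / (s - e) ≤ M / (M - 1) := by
    rw [div_le_div_iff₀ hse' (by linarith)]
    nlinarith
  have hratio' : s / (s - e) ≤ 1 + 2 * (e / s) := by
    rw [div_le_iff₀ hse']
    field_simp
    nlinarith
  set A := e ^ 2 / s ^ 2 - p ^ 2 / s ^ 4
  have hA : 0 ≤ A := by
    rw [sub_nonneg, div_le_div_iff₀ (by positivity) (by positivity)]
    nlinarith
  have hA' : A ≤ (e / s) ^ 2 := by
    rw [div_pow]
    linarith [div_nonneg (sq_nonneg p) (pow_pos hs 4).le]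
  calc 2 - 2 * (s ^ 2 + p) / (t * s)
      = 2 * (e ^ 2 * s ^ 2 - p ^ 2) / (t * s * (t * s + s ^ 2 + p)) := by
        rw [eq_div_iff hD.ne']
        field_simp
        linear_combination s ^ 2 * hts
    _ ≤ 2 * (e ^ 2 * s ^ 2 - p ^ 2) / (2 * (s ^ 2 * (s - e) ^ 2)) := by
        gcongr
        nlinarith
    _ = A * (s / (s - e)) ^ 2 := by
        simp only [A]
        field_simp
    _ ≤ A * (M / (M - 1) * (1 + 2 * (e / s))) := by
        gcongr
        rw [sq]
        exact mul_le_mul hratio hratio' (div_pos hs hse').le hM1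
    _ = M / (M - 1) * (A + 2 * (e / s) * A) := by ring
    _ ≤ M / (M - 1) * (A + 2 * (e / s) * (e / s) ^ 2) := by gcongr
    _ = M / (M - 1) * (A + 2 * e ^ 3 / s ^ 3) := by ring

section InnerProductSpace

variable {E : Type*} [NormedAddCommGroup E] [InnerProductSpace ℝ E]

theorem norm_inv_smul_sub_inv_smul_sq {x y : E} (hx : x ≠ 0) (hy : y ≠ 0) :
    ‖‖y‖⁻¹ • y - ‖x‖⁻¹ • x‖ ^ 2 = 2 - 2 * inner ℝ y x / (‖y‖ * ‖x‖) := by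
  have hx' : ‖x‖ ≠ 0 := norm_ne_zero_iff.2 hx
  have hy' : ‖y‖ ≠ 0 := norm_ne_zero_iff.2 hy
  rw [@norm_sub_sq_real, real_inner_smul_left, real_inner_smul_right, norm_smul, norm_smul,
    norm_inv, norm_inv, norm_norm, norm_norm, inv_mul_cancel₀ hx', inv_mul_cancel₀ hy']
  field_simp
  ring

theorem norm_inv_smul_add_sub_inv_smul_sq_le {M : ℝ} (hM : 2 < M) {x h : E} (hx : x ≠ 0)
    (hxh : M * ‖h‖ ≤ ‖x‖) :
    ‖‖x + h‖⁻¹ • (x + h) - ‖x‖⁻¹ • x‖ ^ 2 ≤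
      M / (M - 1) * (‖h‖ ^ 2 / ‖x‖ ^ 2 - inner ℝ x h ^ 2 / ‖x‖ ^ 4 + 2 * ‖h‖ ^ 3 / ‖x‖ ^ 3) := by
  have hx' : 0 < ‖x‖ := norm_pos_iff.2 hx
  have hlow : ‖x‖ - ‖h‖ ≤ ‖x + h‖ := by simpa using norm_sub_norm_le x (-h)
  have hxh0 : x + h ≠ 0 := norm_pos_iff.1 <| by nlinarith [norm_nonneg h]
  rw [norm_inv_smul_sub_inv_smul_sq hx hxh0, inner_add_left, real_inner_self_eq_norm_sq,
    real_inner_comm]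
  exact two_sub_two_mul_div_le hM hx' hxh hlow (abs_real_inner_le_norm x h)
    (norm_add_sq_real x h)

end InnerProductSpace

theorem integrableOn_annulus_of_continuousAt {E F : Type*} [NormedAddCommGroup E] [ProperSpace E]
    [MeasurableSpace E] [OpensMeasurableSpace E] [NormedAddCommGroup F] (μ : Measure E)
    [IsFiniteMeasureOnCompacts μ] {a b : ℝ} (ha : 0 < a) {f : E → F}
    (hf : ∀ x ≠ 0, ContinuousAt f x) : IntegrableOn f (ball 0 b \ ball 0 a) μ := by
  have hcont : ContinuousOn f (closedBall 0 b \ ball 0 a) := fun x hx =>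
    (hf x fun h0 => hx.2 (h0 ▸ mem_ball_self ha)).continuousWithinAt
  exact (hcont.integrableOn_compact (isCompact_closedBall 0 b |>.diff isOpen_ball)).mono_set
    (sdiff_subset_sdiff_left ball_subset_closedBall)

theorem setIntegral_annulus_fun_norm {E F : Type*} [NormedAddCommGroup E] [NormedSpace ℝ E]
    [Nontrivial E] [FiniteDimensional ℝ E] [MeasurableSpace E] [BorelSpace E]
    [NormedAddCommGroup F] [NormedSpace ℝ F] (μ : Measure E) [μ.IsAddHaarMeasure] {a b : ℝ}
    (ha : 0 < a) (f : ℝ → F) :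
    ∫ x in ball 0 b \ ball 0 a, f ‖x‖ ∂μ =
      Module.finrank ℝ E • μ.real (ball 0 1) •
        ∫ y in Ico a b, y ^ (Module.finrank ℝ E - 1) • f y := by
  have hannulus : ball (0 : E) b \ ball 0 a = (‖·‖) ⁻¹' Ico a b := by
    ext x
    simp [and_comm]
  have hIco : Ico a b ∩ Ioi 0 = Ico a b := inter_eq_left.2 fun y hy => ha.trans_le hy.1
  rw [hannulus, ← integral_indicator (measurableSet_Ico.preimage measurable_norm),
    ← integral_indicator measurableSet_Ico]
  convert integral_fun_norm_addHaar μ ((Ico a b).indicator f) using 3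
  · rfl
  · rw [← indicator_smul, integral_indicator measurableSet_Ico,
      integral_indicator measurableSet_Ico, Measure.restrict_restrict measurableSet_Ico, hIco]

section Plane

variable {a b : ℝ}

theorem setIntegral_annulus_fun_norm_fin_two (f : ℝ → ℝ) (ha : 0 < a) :
    ∫ x in ball (0 : E2) b \ ball 0 a, f ‖x‖ = 2 * π * ∫ y in Ico a b, y * f y := by
  rw [setIntegral_annulus_fun_norm volume ha, finrank_euclideanSpace_fin]
  simp [measureReal_def, ENNReal.toReal_ofReal pi_nonneg]
  ring

theorem setIntegral_annulus_inv_norm_sq (ha : 0 < a) (hab : a ≤ b) :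
    ∫ x in ball (0 : E2) b \ ball 0 a, (‖x‖ ^ 2)⁻¹ = 2 * π * (log b - log a) := by
  rw [setIntegral_annulus_fun_norm_fin_two (fun y => (y ^ 2)⁻¹) ha,
    integral_Ico_eq_integral_Ioc, ← intervalIntegral.integral_of_le hab,
    intervalIntegral.integral_congr (g := fun y => y⁻¹), integral_inv_of_pos ha (ha.trans_le hab),
    log_div (ha.trans_le hab).ne' ha.ne']
  intro y hy
  have : y ≠ 0 := (ha.trans_le (uIcc_of_le hab ▸ hy).1).ne'
  field_simp

theorem setIntegral_annulus_inv_norm_pow_three (ha : 0 < a) (hab : a ≤ b) :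
    ∫ x in ball (0 : E2) b \ ball 0 a, (‖x‖ ^ 3)⁻¹ = 2 * π * (a⁻¹ - b⁻¹) := by
  rw [setIntegral_annulus_fun_norm_fin_two (fun y => (y ^ 3)⁻¹) ha,
    integral_Ico_eq_integral_Ioc, ← intervalIntegral.integral_of_le hab,
    intervalIntegral.integral_congr (g := fun y => y ^ (-2 : ℤ)), integral_zpow]
  · norm_num
    ring
  · exact Or.inr ⟨by norm_num, fun h0 => (uIcc_of_le hab ▸ h0).1.not_gt ha⟩
  intro y hy
  have : y ≠ 0 := (ha.trans_le (uIcc_of_le hab ▸ hy).1).ne'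
  field_simp

/- The right-angle rotation `J` preserves the annulus and `⟪x, h⟫² + ⟪x, J h⟫² = ‖x‖²‖h‖²`. -/
theorem setIntegral_annulus_inner_sq_div_norm_pow_four (h : E2) (ha : 0 < a) :
    ∫ x in ball (0 : E2) b \ ball 0 a, inner ℝ x h ^ 2 / ‖x‖ ^ 4 =
      ‖h‖ ^ 2 / 2 * ∫ x in ball (0 : E2) b \ ball 0 a, (‖x‖ ^ 2)⁻¹ := by
  set S := ball (0 : E2) b \ ball 0 a
  have : Fact (Module.finrank ℝ E2 = 2) := ⟨finrank_euclideanSpace_fin⟩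
  let J := (EuclideanSpace.basisFun (Fin 2) ℝ).toBasis.orientation.rightAngleRotation
  have hS : MeasurableSet S := measurableSet_ball.diff measurableSet_ball
  have hJS : J ⁻¹' S = S := by
    ext x
    simp [S]
  have int_inner (v : E2) : IntegrableOn (fun x : E2 => inner ℝ x v ^ 2 / ‖x‖ ^ 4) S :=
    integrableOn_annulus_of_continuousAt volume ha fun x hx => by fun_prop (disch := simpa)
  have hJ : ∫ x in S, inner ℝ x (J h) ^ 2 / ‖x‖ ^ 4 = ∫ x in S, inner ℝ x h ^ 2 / ‖x‖ ^ 4 := by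
    rw [← J.measurePreserving.setIntegral_preimage_emb J.toHomeomorph.measurableEmbedding, hJS]
    simp only [LinearIsometryEquiv.inner_map_map, LinearIsometryEquiv.norm_map]
  have hsum : ∀ x ∈ S, inner ℝ x h ^ 2 / ‖x‖ ^ 4 + inner ℝ x (J h) ^ 2 / ‖x‖ ^ 4 =
      ‖h‖ ^ 2 * (‖x‖ ^ 2)⁻¹ := by
    intro x hx
    have hx0 : ‖x‖ ≠ 0 := norm_ne_zero_iff.2 fun h0 => hx.2 (h0 ▸ mem_ball_self ha)
    rw [← add_div, Orientation.inner_rightAngleRotation_right, neg_sq,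
      Orientation.inner_sq_add_areaForm_sq]
    field_simp
  have := setIntegral_congr_fun (μ := volume) hS hsum
  rw [integral_add (int_inner h) (int_inner (J h)), hJ, integral_const_mul] at this
  linarith

theorem setIntegral_annulus_expansion (h : E2) (ha : 0 < a) (hab : a ≤ b) :
    ∫ x in ball (0 : E2) b \ ball 0 a,
        (‖h‖ ^ 2 / ‖x‖ ^ 2 - inner ℝ x h ^ 2 / ‖x‖ ^ 4 + 2 * ‖h‖ ^ 3 / ‖x‖ ^ 3) =
      2 * π * ‖h‖ ^ 2 * (1 / 2 * (log b - log a) + 2 * ‖h‖ * (a⁻¹ - b⁻¹)) := by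
  set S := ball (0 : E2) b \ ball 0 a
  have int_sq : IntegrableOn (fun x : E2 => ‖h‖ ^ 2 / ‖x‖ ^ 2) S :=
    integrableOn_annulus_of_continuousAt volume ha fun x hx => by fun_prop (disch := simpa)
  have int_inner : IntegrableOn (fun x : E2 => inner ℝ x h ^ 2 / ‖x‖ ^ 4) S :=
    integrableOn_annulus_of_continuousAt volume ha fun x hx => by fun_prop (disch := simpa)
  have int_cube : IntegrableOn (fun x : E2 => 2 * ‖h‖ ^ 3 / ‖x‖ ^ 3) S :=
    integrableOn_annulus_of_continuousAt volume ha fun x hx => by fun_prop (disch := simpa)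
  have int_sq_sub_inner :
      IntegrableOn (fun x : E2 => ‖h‖ ^ 2 / ‖x‖ ^ 2 - inner ℝ x h ^ 2 / ‖x‖ ^ 4) S :=
    int_sq.sub int_inner
  rw [integral_add int_sq_sub_inner int_cube, integral_sub int_sq int_inner,
    setIntegral_annulus_inner_sq_div_norm_pow_four h ha]
  simp only [div_eq_mul_inv, integral_const_mul]
  rw [← div_eq_mul_inv, ← div_eq_mul_inv, setIntegral_annulus_inv_norm_sq ha hab,
    setIntegral_annulus_inv_norm_pow_three ha hab]
  ring

theorem setIntegral_annulus_norm_inv_smul_add_sub_sq_le {M : ℝ} (hM : 2 < M) (ha : 0 < a)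
    (hab : a ≤ b) {h : E2} (hMh : M * ‖h‖ ≤ a) :
    ∫ x in ball (0 : E2) b \ ball 0 a, ‖‖x + h‖⁻¹ • (x + h) - ‖x‖⁻¹ • x‖ ^ 2 ≤
      M / (M - 1) * (2 * π * ‖h‖ ^ 2 * (1 / 2 * (log b - log a) + 2 / M)) := by
  have hM1 : 0 ≤ M / (M - 1) := div_nonneg (by linarith) (by linarith)
  have hpt : ∀ x ∈ ball (0 : E2) b \ ball 0 a, ‖‖x + h‖⁻¹ • (x + h) - ‖x‖⁻¹ • x‖ ^ 2 ≤
      M / (M - 1) * (‖h‖ ^ 2 / ‖x‖ ^ 2 - inner ℝ x h ^ 2 / ‖x‖ ^ 4 + 2 * ‖h‖ ^ 3 / ‖x‖ ^ 3) :=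
    fun x hx => norm_inv_smul_add_sub_inv_smul_sq_le hM (fun h0 => hx.2 (h0 ▸ mem_ball_self ha))
      (hMh.trans (by simpa using hx.2))
  have hcubic : 2 * ‖h‖ * (a⁻¹ - b⁻¹) ≤ 2 / M := by
    have hb : 0 ≤ b⁻¹ := inv_nonneg.2 (ha.le.trans hab)
    have : ‖h‖ / a ≤ 1 / M := by
      rw [div_le_div_iff₀ ha (by linarith)]
      linarith
    rw [mul_sub, ← div_eq_mul_inv, mul_div_assoc]
    linarith [mul_nonneg (norm_nonneg h) hb, show 2 / M = 2 * (1 / M) by ring]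
  calc _ ≤ ∫ x in ball (0 : E2) b \ ball 0 a, M / (M - 1) *
          (‖h‖ ^ 2 / ‖x‖ ^ 2 - inner ℝ x h ^ 2 / ‖x‖ ^ 4 + 2 * ‖h‖ ^ 3 / ‖x‖ ^ 3) :=
        integral_mono_of_nonneg (.of_forall fun _ => by positivity)
          (integrableOn_annulus_of_continuousAt volume ha fun x hx => by fun_prop (disch := simpa))
          ((ae_restrict_iff' (measurableSet_ball.diff measurableSet_ball)).2 (.of_forall hpt))
    _ = M / (M - 1) * (2 * π * ‖h‖ ^ 2 * (1 / 2 * (log b - log a) + 2 * ‖h‖ * (a⁻¹ - b⁻¹))) := by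
        rw [integral_const_mul, setIntegral_annulus_expansion h ha hab]
    _ ≤ _ := by gcongr

end Plane

/-- Annulus estimate for translated vortices: there is a universal constant `C` such that for
`u(x) = x/|x|`, `M > 2`, `τ > 0`, `Mτ < r`, and `|ξ| ≤ 1`,
`∫_{B_r∖B_{Mτ}} |u(x+τξ)−u(x)|² dx
  ≤ (M/(M−1)) 2π τ²|ξ|² (½|log(Mτ)| + ½|log r| + C/M)`. -/
theorem vortex_translation_estimate :
    ∃ C : ℝ, 0 < C ∧ ∀ (M τ r : ℝ), 2 < M → 0 < τ → M * τ < r →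
      ∀ ξ : E2, ‖ξ‖ ≤ 1 →
      (∫ x in ball (0 : E2) r \ ball (0 : E2) (M * τ),
          ‖(‖x + τ • ξ‖⁻¹ • (x + τ • ξ) : E2) - ‖x‖⁻¹ • x‖ ^ 2) ≤
        M / (M - 1) * (2 * π) * τ ^ 2 * ‖ξ‖ ^ 2 *
          (1 / 2 * |Real.log (M * τ)| + 1 / 2 * |Real.log r| + C / M) := by
  refine ⟨2, two_pos, fun M τ r hM hτ hMr ξ hξ => ?_⟩
  have hτξ : ‖τ • ξ‖ = τ * ‖ξ‖ := by rw [norm_smul, Real.norm_of_nonneg hτ.le]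
  have hMτξ : M * ‖τ • ξ‖ ≤ M * τ := by
    rw [hτξ]
    gcongr
    exact mul_le_of_le_one_right hτ.le hξ
  have hM1 : 0 ≤ M / (M - 1) := div_nonneg (by linarith) (by linarith)
  calc _ ≤ M / (M - 1) * (2 * π * ‖τ • ξ‖ ^ 2 * (1 / 2 * (log r - log (M * τ)) + 2 / M)) :=
        setIntegral_annulus_norm_inv_smul_add_sub_sq_le hM (mul_pos (by linarith) hτ) hMr.le hMτξ
    _ = M / (M - 1) * (2 * π) * τ ^ 2 * ‖ξ‖ ^ 2 * (1 / 2 * (log r - log (M * τ)) + 2 / M) := by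
        rw [hτξ]
        ring
    _ ≤ _ := by
        gcongr
        linarith [le_abs_self (log r), neg_abs_le (log (M * τ))]
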